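/- Let Λ ⊆ GLₙ(ℝ) be an approximate subgroup with λ(ℤⁿ) ⊆ Γ₂ for all λ ∈ Λ, where ℤⁿ ⊆ Γ₂ ⊆ (1/m)ℤⁿ for some positive integer m. Then there exists an approximate subgroup Ξ ⊆ Λ⁴ commensurable to Λ with Ξ ⊆ GLₙ(ℤ) (i.e. every element of Ξ preserves ℤⁿ). -/

import Mathlib

open Pointwise

def IsApproxSubgroup {G : Type*} [Group G] (Λ : Set G) : Prop :=
  (1 : G) ∈ Λ ∧ Λ⁻¹ = Λ ∧ ∃ F : Set G, F.Finite ∧ Λ * Λ ⊆ F * Λ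

def SetCommensurable {G : Type*} [Group G] (A B : Set G) : Prop :=
  ∃ F : Set G, F.Finite ∧ A ⊆ F * B ∧ B ⊆ F * A

def intLat (n : ℕ) : Set (Fin n → ℝ) := {v | ∀ i, ∃ k : ℤ, v i = (k : ℝ)}

/-! For `g ∈ Λ` the lattice `g ℤⁿ` lies in `(1/m) ℤⁿ`, and since `g⁻¹ ∈ Λ` too, it contains
`m ℤⁿ`. Only finitely many subgroups lie between `m ℤⁿ` and `(1/m) ℤⁿ` (each is determined by
its intersection with a finite set of representatives of the quotient), so `Λ` meets only
finitely many left cosets of the stabiliser `H = GLₙ(ℤ)` of `ℤⁿ`. Then `Ξ = Λ² ∩ H` works: it is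
an approximate subgroup as the intersection of two, it lies in `Λ² ⊆ F Λ`, and picking one
`t ∈ Λ` in each coset met gives `Λ ⊆ ⋃ t (Λ² ∩ H)`. -/

open Set MulAction

section ApproxSubgroup

variable {G : Type*} [Group G] {Λ : Set G}

theorem isApproxSubgroup_iff_exists_isApproximateSubgroup :
    IsApproxSubgroup Λ ↔ ∃ K : ℝ, IsApproximateSubgroup K Λ := by
  constructor
  · rintro ⟨h1, hinv, F, hF, hsq⟩
    exact ⟨hF.toFinset.card, h1, hinv, hF.toFinset, le_rfl, by simpa [sq] using hsq⟩
  · rintro ⟨K, h1, hinv, F, -, hsq⟩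
    exact ⟨h1, hinv, F, F.finite_toSet, by simpa [sq] using hsq⟩

theorem IsApproxSubgroup.inv_mem (hΛ : IsApproxSubgroup Λ) {g : G} (hg : g ∈ Λ) : g⁻¹ ∈ Λ :=
  hΛ.2.1 ▸ inv_mem_inv.2 hg

theorem IsApproxSubgroup.sq_inter_subgroup (hΛ : IsApproxSubgroup Λ) (H : Subgroup G) :
    IsApproxSubgroup (Λ ^ 2 ∩ H) := by
  obtain ⟨K, hK⟩ := isApproxSubgroup_iff_exists_isApproximateSubgroup.1 hΛ
  have := hK.pow_inter_pow (IsApproximateSubgroup.subgroup (H := H)) le_rfl le_rfl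
  rw [coe_set_pow two_ne_zero] at this
  exact isApproxSubgroup_iff_exists_isApproximateSubgroup.2 ⟨_, this⟩

theorem exists_finite_subset_subset_mul_inv_mul_inter {H : Subgroup G}
    (hfin : ((↑) '' Λ : Set (G ⧸ H)).Finite) :
    ∃ T ⊆ Λ, T.Finite ∧ Λ ⊆ T * (Λ⁻¹ * Λ ∩ H) := by
  obtain ⟨T, hTΛ, hbij⟩ := exists_subset_bijOn Λ ((↑) : G → G ⧸ H)
  refine ⟨T, hTΛ, Finite.of_finite_image (hbij.image_eq ▸ hfin) hbij.injOn, fun g hg => ?_⟩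
  obtain ⟨t, ht, hgt⟩ := hbij.surjOn ⟨g, hg, rfl⟩
  exact ⟨t, ht, t⁻¹ * g, ⟨mul_mem_mul (inv_mem_inv.2 (hTΛ ht)) hg, QuotientGroup.eq.1 hgt⟩,
    mul_inv_cancel_left t g⟩

theorem IsApproxSubgroup.setCommensurable_sq_inter (hΛ : IsApproxSubgroup Λ) {H : Subgroup G}
    (hfin : ((↑) '' Λ : Set (G ⧸ H)).Finite) : SetCommensurable (Λ ^ 2 ∩ H) Λ := by
  obtain ⟨-, hsymm, F, hF, hsq⟩ := hΛ
  obtain ⟨T, -, hT, hΛT⟩ := exists_finite_subset_subset_mul_inv_mul_inter hfin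
  rw [hsymm, ← sq] at hΛT
  refine ⟨F ∪ T, hF.union hT, ?_, hΛT.trans (mul_subset_mul_right subset_union_right)⟩
  calc Λ ^ 2 ∩ H ⊆ Λ * Λ := sq Λ ▸ inter_subset_left
    _ ⊆ F * Λ := hsq
    _ ⊆ (F ∪ T) * Λ := mul_subset_mul_right subset_union_left

theorem MulAction.finite_image_mk_stabilizer {α : Type*} [MulAction G α] {x : α}
    (h : ((· • x) '' Λ).Finite) : ((↑) '' Λ : Set (G ⧸ stabilizer G x)).Finite :=
  Finite.of_finite_image (by rwa [image_image]) (injective_ofQuotientStabilizer G x).injOn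

end ApproxSubgroup

theorem AddSubgroup.finite_Icc_of_subset_add {V : Type*} [AddGroup V] {A B : AddSubgroup V}
    {S : Set V} (hS : S.Finite) (hB : (B : Set V) ⊆ S + A) : (Icc A B).Finite := by
  have key : ∀ L₁ ∈ Icc A B, ∀ L₂ ∈ Icc A B, (L₁ : Set V) ∩ S = (L₂ : Set V) ∩ S → L₁ ≤ L₂ := by
    rintro L₁ ⟨hA₁, hB₁⟩ L₂ ⟨hA₂, -⟩ heq v hv
    obtain ⟨s, hs, a, ha, rfl⟩ := hB (hB₁ hv)
    have : s ∈ (L₂ : Set V) ∩ S := heq ▸ ⟨by simpa using L₁.sub_mem hv (hA₁ ha), hs⟩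
    exact L₂.add_mem this.1 (hA₂ ha)
  refine Finite.of_finite_image (f := fun L : AddSubgroup V => (L : Set V) ∩ S)
    (hS.finite_subsets.subset ?_) fun L₁ h₁ L₂ h₂ heq => ?_
  · rintro _ ⟨L, -, rfl⟩
    exact inter_subset_right
  · exact le_antisymm (key L₁ h₁ L₂ h₂ heq) (key L₂ h₂ L₁ h₁ heq.symm)

theorem AddSubgroup.smul_le_pointwise_smul_of_inv_smul_le {G K V : Type*} [Group G]
    [GroupWithZero K] [AddGroup V] [DistribMulAction G V] [DistribMulAction K V]
    [SMulCommClass K G V] {L : AddSubgroup V} {g : G} {c : K} (hc : c ≠ 0)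
    (h : g⁻¹ • L ≤ c⁻¹ • L) : c • L ≤ g • L := by
  rintro _ ⟨y, hy, rfl⟩
  obtain ⟨z, hz, hzy⟩ := (mem_smul_pointwise_iff_exists _ _ _).1
    (h (smul_mem_pointwise_smul y g⁻¹ L hy))
  refine (mem_smul_pointwise_iff_exists _ _ _).2 ⟨z, hz, ?_⟩
  calc g • z = g • c • c⁻¹ • z := by rw [smul_inv_smul₀ hc]
    _ = c • g • g⁻¹ • y := by rw [hzy, ← smul_comm c g]
    _ = c • y := by rw [smul_inv_smul]

section IntLattice

variable {n : ℕ}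

def intLatAddSubgroup (n : ℕ) : AddSubgroup (Fin n → ℝ) :=
  ((Int.castAddHom ℝ).compLeft (Fin n)).range

theorem coe_intLatAddSubgroup : (intLatAddSubgroup n : Set (Fin n → ℝ)) = intLat n := by
  ext v
  simp [intLatAddSubgroup, intLat, funext_iff, Classical.skolem, eq_comm]

theorem mem_inv_smul_intLatAddSubgroup {m : ℝ} {v : Fin n → ℝ}
    (hv : ∀ i, ∃ k : ℤ, v i = k / m) : v ∈ m⁻¹ • intLatAddSubgroup n := by
  choose k hk using hv
  refine (AddSubgroup.mem_smul_pointwise_iff_exists _ _ _).2 ⟨fun i => k i, ⟨k, rfl⟩, ?_⟩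
  ext i
  simp [hk, div_eq_inv_mul]

theorem coe_inv_smul_intLatAddSubgroup_subset_add {m : ℕ} (hm : m ≠ 0) :
    (((m : ℝ)⁻¹ • intLatAddSubgroup n : AddSubgroup (Fin n → ℝ)) : Set (Fin n → ℝ)) ⊆
      (fun r : Fin n → ℤ => (m : ℝ)⁻¹ • fun i => (r i : ℝ)) ''
          pi univ (fun _ => Ico 0 ((m : ℤ) * m)) +
        (((m : ℝ) • intLatAddSubgroup n : AddSubgroup (Fin n → ℝ)) : Set (Fin n → ℝ)) := by
  have hN : 0 < (m : ℤ) * m := by positivity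
  have hm' : (m : ℝ) ≠ 0 := by positivity
  rintro _ ⟨_, ⟨k, rfl⟩, rfl⟩
  refine ⟨_, ⟨fun i => k i % (m * m),
      fun i _ => ⟨Int.emod_nonneg _ hN.ne', Int.emod_lt_of_pos _ hN⟩, rfl⟩,
    _, ⟨_, ⟨fun i => k i / (m * m), rfl⟩, rfl⟩, ?_⟩
  ext i
  have hk : (k i : ℝ) = (k i % (m * m) : ℤ) + m * m * (k i / (m * m) : ℤ) := by
    exact_mod_cast (Int.emod_add_mul_ediv (k i) (m * m)).symm
  simp [hk, mul_add, ← mul_assoc, hm']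

theorem finite_Icc_smul_intLatAddSubgroup {m : ℕ} (hm : m ≠ 0) :
    (Icc ((m : ℝ) • intLatAddSubgroup n) ((m : ℝ)⁻¹ • intLatAddSubgroup n)).Finite :=
  AddSubgroup.finite_Icc_of_subset_add ((Finite.pi fun _ => finite_Ico _ _).image _)
    (coe_inv_smul_intLatAddSubgroup_subset_add hm)

end IntLattice

theorem stmt11_general {n : ℕ} (m : ℕ) (hm : 0 < m)
    (Λ : Set (GL (Fin n) ℝ)) (hΛ : IsApproxSubgroup Λ)
    (Γ₂ : Set (Fin n → ℝ))
    (h2 : Γ₂ ⊆ {v | ∀ i, ∃ k : ℤ, v i = (k : ℝ) / m})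
    (hmap : ∀ l ∈ Λ, ∀ v ∈ intLat n,
      (l : Matrix (Fin n) (Fin n) ℝ).mulVec v ∈ Γ₂) :
    ∃ Ξ : Set (GL (Fin n) ℝ), Ξ ⊆ Λ ^ 4 ∧ IsApproxSubgroup Ξ ∧
      SetCommensurable Ξ Λ ∧
      ∀ g ∈ Ξ, (fun v => (g : Matrix (Fin n) (Fin n) ℝ).mulVec v) '' intLat n
        = intLat n := by
  set Z := intLatAddSubgroup n
  have hm₀ : (m : ℝ) ≠ 0 := by positivity
  have hup : ∀ g ∈ Λ, g • Z ≤ (m : ℝ)⁻¹ • Z := by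
    rintro g hg _ ⟨v, hv, rfl⟩
    exact mem_inv_smul_intLatAddSubgroup (h2 (hmap g hg v (coe_intLatAddSubgroup ▸ hv)))
  have hfin : ((· • Z) '' Λ).Finite := (finite_Icc_smul_intLatAddSubgroup hm.ne').subset <| by
    rintro _ ⟨g, hg, rfl⟩
    exact ⟨AddSubgroup.smul_le_pointwise_smul_of_inv_smul_le hm₀ (hup _ (hΛ.inv_mem hg)),
      hup g hg⟩
  refine ⟨Λ ^ 2 ∩ (stabilizer (GL (Fin n) ℝ) Z : Set (GL (Fin n) ℝ)),
    inter_subset_left.trans (pow_subset_pow_right hΛ.1 (by norm_num)), hΛ.sq_inter_subgroup _, hΛ.setCommensurable_sq_inter (finite_image_mk_stabilizer hfin), ?_⟩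
  rintro g ⟨-, hg⟩
  have hgZ := congrArg SetLike.coe (mem_stabilizer_iff.1 hg)
  rwa [Units.smul_def, AddSubgroup.coe_pointwise_smul, coe_intLatAddSubgroup,
    ← image_smul] at hgZ

theorem stmt11 {n : ℕ} (m : ℕ) (hm : 0 < m)
    (Λ : Set (GL (Fin n) ℝ)) (hΛ : IsApproxSubgroup Λ)
    (Γ₂ : Set (Fin n → ℝ)) (h1 : intLat n ⊆ Γ₂)
    (h2 : Γ₂ ⊆ {v | ∀ i, ∃ k : ℤ, v i = (k : ℝ) / m})
    (hmap : ∀ l ∈ Λ, ∀ v ∈ intLat n,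
      (l : Matrix (Fin n) (Fin n) ℝ).mulVec v ∈ Γ₂) :
    ∃ Ξ : Set (GL (Fin n) ℝ), Ξ ⊆ Λ ^ 4 ∧ IsApproxSubgroup Ξ ∧
      SetCommensurable Ξ Λ ∧
      ∀ g ∈ Ξ, (fun v => (g : Matrix (Fin n) (Fin n) ℝ).mulVec v) '' intLat n
        = intLat n :=
  stmt11_general m hm Λ hΛ Γ₂ h2 hmap
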